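/- There exists λ̂ ≥ (6^6/5^5)·(4πN/Vol(V)) such that the generalized Chern–Simons equation Δu = λ e^u (e^u − 1)^5 + 4π Σ_{s=1}^N δ_{p_s} has a solution for every λ ≥ λ̂ and has no solution for any 0 < λ < λ̂. -/

import Mathlib

open Real

/-- The graph Laplacian: `Δu(x) = (1/μ(x)) Σ_y w(x,y)(u(y) − u(x))`. -/
noncomputable def lapl {V : Type*} [Fintype V] (μ : V → ℝ) (w : V → V → ℝ) (u : V → ℝ) (x : V) : ℝ :=
  (1 / μ x) * ∑ y, w x y * (u y - u x)

/-- The integral on the graph: `∫_V f dμ = Σ_x μ(x) f(x)`. -/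
noncomputable def integ {V : Type*} [Fintype V] (μ : V → ℝ) (f : V → ℝ) : ℝ := ∑ x, μ x * f x

/-- The volume of the graph: `Vol(V) = Σ_x μ(x)`. -/
noncomputable def vol {V : Type*} [Fintype V] (μ : V → ℝ) : ℝ := ∑ x, μ x

/-- The Dirac mass at `p`. -/
noncomputable def dirac {V : Type*} [DecidableEq V] (μ : V → ℝ) (p x : V) : ℝ :=
  if x = p then 1 / μ p else 0

/-- The squared length of the gradient: `|∇u|²(x) = (1/(2μ(x))) Σ_y w(x,y)(u(y) − u(x))²`. -/
noncomputable def gradSq {V : Type*} [Fintype V] (μ : V → ℝ) (w : V → V → ℝ) (u : V → ℝ) (x : V) : ℝ :=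
  (1 / (2 * μ x)) * ∑ y, w x y * (u y - u x) ^ 2

/-- The gradient form `Γ(u,φ)(x) = (1/(2μ(x))) Σ_y w(x,y)(u(y) − u(x))(φ(y) − φ(x))`. -/
noncomputable def gamma {V : Type*} [Fintype V] (μ : V → ℝ) (w : V → V → ℝ) (u φ : V → ℝ) (x : V) : ℝ :=
  (1 / (2 * μ x)) * ∑ y, w x y * (u y - u x) * (φ y - φ x)

/-- `u` solves the generalized Chern–Simons equation
    `Δu = λ e^u (e^u − 1)^5 + 4π Σ_s δ_{p_s}` with parameter `lam`. -/
noncomputable def isSol {V : Type*} [Fintype V] [DecidableEq V] (μ : V → ℝ) (w : V → V → ℝ)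
    {N : ℕ} (p : Fin N → V) (lam : ℝ) (u : V → ℝ) : Prop :=
  ∀ x, lapl μ w u x =
    lam * Real.exp (u x) * (Real.exp (u x) - 1) ^ 5 + 4 * π * ∑ s, dirac μ (p s) x

/-- The energy functional
    `I_λ(v) = ∫_V [ (1/2)|∇v|² + (λ/6)(e^{u₀+v} − 1)^6 + (4πN/Vol(V)) v ] dμ`. -/
noncomputable def energy {V : Type*} [Fintype V] (μ : V → ℝ) (w : V → V → ℝ)
    (u0 : V → ℝ) (N : ℕ) (lam : ℝ) (v : V → ℝ) : ℝ :=
  integ μ (fun x => (1 / 2) * gradSq μ w v x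
    + (lam / 6) * (Real.exp (u0 x + v x) - 1) ^ 6 + (4 * π * N / vol μ) * v x)

/-- The Sobolev `W^{1,2}` norm `(∫_V (|∇v|² + v²) dμ)^{1/2}`. -/
noncomputable def sobNorm {V : Type*} [Fintype V] (μ : V → ℝ) (w : V → V → ℝ)
    (v : V → ℝ) : ℝ :=
  Real.sqrt (integ μ (fun x => gradSq μ w v x + v x ^ 2))

/-- The derivative of the energy functional at `v` in direction `φ`:
    `∫_V Γ(v,φ) dμ + λ ∫_V e^{u₀+v}(e^{u₀+v} − 1)^5 φ dμ + (4πN/Vol(V)) ∫_V φ dμ`. -/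
noncomputable def dEnergy {V : Type*} [Fintype V] (μ : V → ℝ) (w : V → V → ℝ)
    (u0 : V → ℝ) (N : ℕ) (lam : ℝ) (v φ : V → ℝ) : ℝ :=
  integ μ (gamma μ w v φ)
    + lam * integ μ (fun x => Real.exp (u0 x + v x) * (Real.exp (u0 x + v x) - 1) ^ 5 * φ x)
    + (4 * π * N / vol μ) * integ μ φ

/-!
Write `F(t) = e^t (e^t - 1)^5` (`csNonlin`), so that `F ≥ -5⁵/6⁶` with equality at `t = -log 6`.
For `λ > 0` the maximum principle forces solutions to be `≤ 0`, and integrating the equation gives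
`λ ∫ F(u) = -4πN`, whence `λ ≥ (6⁶/5⁵) 4πN / Vol(V)`.

Since `0` is always a supersolution, every subsolution `a ≤ 0` yields a solution. The constant
`-log 6` is a subsolution for large `λ`, and a solution for `λ'` is a subsolution for every
`λ ≥ λ'`, so the solvable `λ` form a half-line. Its endpoint `λ̂` is attained: for bounded `λ`, the
integral identity bounds `max u` from below, and connectedness propagates a lower bound along edges,
so solutions stay in a compact set.
-/

noncomputable def csNonlin (t : ℝ) : ℝ := exp t * (exp t - 1) ^ 5

lemma csNonlin_zero : csNonlin 0 = 0 := by simp [csNonlin]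

lemma csNonlin_neg_log_six : csNonlin (-log 6) = -(5 ^ 5 / 6 ^ 6) := by
  rw [csNonlin, exp_neg, exp_log (by norm_num)]
  norm_num

lemma csNonlin_nonpos_iff {t : ℝ} : csNonlin t ≤ 0 ↔ t ≤ 0 := by
  rw [csNonlin, mul_nonpos_iff_pos_imp_nonpos, Odd.pow_nonpos_iff (by decide), sub_nonpos,
    exp_le_one_iff]
  simp [exp_pos, (exp_pos t).le]

/-- The minimum of `s (s - 1)^5` over `s > 0` is attained at `s = 1/6`. -/
lemma neg_le_csNonlin (t : ℝ) : -(5 ^ 5 / 6 ^ 6 : ℝ) ≤ csNonlin t := by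
  rcases le_or_gt t 0 with ht | ht
  · have hs₀ : 0 < exp t := exp_pos t
    have hs₁ : exp t ≤ 1 := exp_le_one_iff.mpr ht
    set s := exp t
    rw [csNonlin]
    nlinarith [sq_nonneg (s - 1 / 6), sq_nonneg ((s - 1 / 6) * (s - 1)),
      sq_nonneg ((s - 1 / 6) * (s - 1) ^ 2), sq_nonneg (s * (s - 1)), sq_nonneg s]
  · have := csNonlin_nonpos_iff.not.mpr ht.not_ge
    linarith

lemma neg_csNonlin_le_exp {t : ℝ} (ht : t ≤ 0) : -csNonlin t ≤ exp t := by
  have hs₀ : 0 < exp t := exp_pos t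
  have hs₁ : exp t ≤ 1 := exp_le_one_iff.mpr ht
  have h : -(exp t - 1) ^ 5 ≤ 1 := by
    rw [← Odd.neg_pow (by decide), neg_sub]
    exact pow_le_one₀ (by linarith) (by linarith)
  rw [csNonlin, ← mul_neg]
  nlinarith

lemma hasDerivAt_csNonlin (t : ℝ) :
    HasDerivAt csNonlin (exp t * (exp t - 1) ^ 4 * (6 * exp t - 1)) t :=
  ((hasDerivAt_exp t).fun_mul (((hasDerivAt_exp t).sub_const 1).fun_pow 5)).congr_deriv (by
    push_cast; ring)

lemma continuous_csNonlin : Continuous csNonlin := by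
  unfold csNonlin
  fun_prop

/-- On `t ≤ 0` the derivative `e^t (e^t - 1)^4 (6 e^t - 1)` is at most `5`. -/
lemma csNonlin_sub_le {s t : ℝ} (hst : s ≤ t) (ht : t ≤ 0) :
    csNonlin t - csNonlin s ≤ 5 * (t - s) := by
  refine (convex_Iic 0).image_sub_le_mul_sub_of_deriv_le continuous_csNonlin.continuousOn
    (fun x _ => (hasDerivAt_csNonlin x).differentiableAt.differentiableWithinAt)
    (fun x hx => ?_) s (hst.trans ht) t ht hst
  rw [interior_Iic] at hx
  have he₀ : 0 < exp x := exp_pos x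
  have he₁ : exp x ≤ 1 := exp_le_one_iff.mpr (le_of_lt hx)
  have hX₀ : 0 ≤ exp x * (exp x - 1) ^ 4 := by positivity
  have hX₁ : exp x * (exp x - 1) ^ 4 ≤ 1 := by
    refine mul_le_one₀ he₁ (by positivity) ?_
    rw [← Even.neg_pow (by decide), neg_sub]
    exact pow_le_one₀ (by linarith) (by linarith)
  rw [(hasDerivAt_csNonlin x).deriv]
  nlinarith

section Laplacian

variable {V : Type*} [Fintype V] {μ : V → ℝ} {w : V → V → ℝ}

lemma lapl_const (c : ℝ) : lapl μ w (fun _ => c) = 0 := by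
  ext x
  simp [lapl]

lemma continuous_lapl : Continuous (lapl μ w) := by
  unfold lapl
  fun_prop

variable (μ w) in
noncomputable def shiftedLapl (K : ℝ) : (V → ℝ) →ₗ[ℝ] (V → ℝ) where
  toFun u x := lapl μ w u x - K * u x
  map_add' u v := by
    ext x
    simp only [lapl, Pi.add_apply, mul_sub, mul_add, Finset.sum_sub_distrib,
      Finset.sum_add_distrib]
    ring
  map_smul' c u := by
    ext x
    simp only [lapl, Pi.smul_apply, smul_eq_mul, RingHom.id_apply, mul_sub,
      Finset.sum_sub_distrib, mul_left_comm _ c, ← Finset.mul_sum]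

lemma shiftedLapl_apply (K : ℝ) (u : V → ℝ) (x : V) :
    shiftedLapl μ w K u x = lapl μ w u x - K * u x := rfl

lemma lapl_nonpos_of_forall_le (hnn : ∀ x y, 0 ≤ w x y) (hmu : ∀ x, 0 < μ x) {u : V → ℝ} {x : V}
    (hx : ∀ y, u y ≤ u x) : lapl μ w u x ≤ 0 :=
  mul_nonpos_of_nonneg_of_nonpos (one_div_nonneg.mpr (hmu x).le) <|
    Finset.sum_nonpos fun y _ => mul_nonpos_of_nonneg_of_nonpos (hnn x y) (sub_nonpos.mpr (hx y))

lemma le_of_shiftedLapl_le (hnn : ∀ x y, 0 ≤ w x y) (hmu : ∀ x, 0 < μ x) {K : ℝ} (hK : 0 < K)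
    {u v : V → ℝ} (h : shiftedLapl μ w K v ≤ shiftedLapl μ w K u) : u ≤ v := by
  intro x
  obtain ⟨x₀, -, hx₀⟩ := Finset.exists_max_image Finset.univ (u - v) ⟨x, Finset.mem_univ x⟩
  have hmax : lapl μ w (u - v) x₀ ≤ 0 :=
    lapl_nonpos_of_forall_le hnn hmu fun y => hx₀ y (Finset.mem_univ y)
  have hx₀' : 0 ≤ shiftedLapl μ w K (u - v) x₀ := by
    rw [map_sub]
    exact sub_nonneg.mpr (h x₀)
  rw [shiftedLapl_apply] at hx₀'
  have : (u - v) x ≤ (u - v) x₀ := hx₀ x (Finset.mem_univ x)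
  simp only [Pi.sub_apply] at this hx₀'
  nlinarith

lemma shiftedLapl_injective (hnn : ∀ x y, 0 ≤ w x y) (hmu : ∀ x, 0 < μ x) {K : ℝ} (hK : 0 < K) :
    Function.Injective (shiftedLapl μ w K) := fun _ _ h =>
  le_antisymm (le_of_shiftedLapl_le hnn hmu hK h.ge) (le_of_shiftedLapl_le hnn hmu hK h.le)

/-- The method of sub- and supersolutions: `T v := (Δ - K)⁻¹ (f v - K v)` is monotone on the
order interval `[a, b]` and maps it into itself, so it has a fixed point by Knaster–Tarski. -/
theorem exists_lapl_eq_of_sub_super (hnn : ∀ x y, 0 ≤ w x y) (hmu : ∀ x, 0 < μ x)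
    {f : V → ℝ → ℝ} {a b : V → ℝ} (hab : a ≤ b)
    (hsub : ∀ x, f x (a x) ≤ lapl μ w a x) (hsup : ∀ x, lapl μ w b x ≤ f x (b x))
    {K : ℝ} (hK : 0 < K)
    (hlip : ∀ x s t, a x ≤ s → s ≤ t → t ≤ b x → f x t - f x s ≤ K * (t - s)) :
    ∃ u ∈ Set.Icc a b, ∀ x, lapl μ w u x = f x (u x) := by
  have : Fact (a ≤ b) := ⟨hab⟩
  let L := LinearEquiv.ofInjectiveEndo _ (shiftedLapl_injective hnn hmu hK)
  let T : (V → ℝ) → V → ℝ := fun v => L.symm fun x => f x (v x) - K * v x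
  have hT : ∀ v, shiftedLapl μ w K (T v) = fun x => f x (v x) - K * v x := fun v =>
    L.apply_symm_apply _
  have hT_mono : ∀ v₁ v₂, a ≤ v₁ → v₁ ≤ v₂ → v₂ ≤ b → T v₁ ≤ T v₂ := by
    intro v₁ v₂ ha h₁₂ hb
    refine le_of_shiftedLapl_le hnn hmu hK ?_
    rw [hT, hT]
    intro x
    linarith [hlip x _ _ (ha x) (h₁₂ x) (hb x)]
  have ha : a ≤ T a := le_of_shiftedLapl_le hnn hmu hK fun x => by
    rw [hT, shiftedLapl_apply]
    linarith [hsub x]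
  have hb : T b ≤ b := le_of_shiftedLapl_le hnn hmu hK fun x => by
    rw [hT, shiftedLapl_apply]
    linarith [hsup x]
  let T' : Set.Icc a b →o Set.Icc a b :=
    { toFun := fun v => ⟨T v, ha.trans (hT_mono _ _ le_rfl v.2.1 v.2.2),
        (hT_mono _ _ v.2.1 v.2.2 le_rfl).trans hb⟩
      monotone' := fun v₁ v₂ h => hT_mono _ _ v₁.2.1 h v₂.2.2 }
  have hfix : T T'.lfp = T'.lfp := congrArg Subtype.val T'.map_lfp
  refine ⟨T'.lfp, T'.lfp.2, fun x => ?_⟩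
  have := congrFun (hT T'.lfp) x
  rw [hfix, shiftedLapl_apply] at this
  linarith

end Laplacian

section Integral

variable {V : Type*} [Fintype V] {μ : V → ℝ}

lemma integ_add (f g : V → ℝ) : integ μ (fun x => f x + g x) = integ μ f + integ μ g := by
  simp only [integ, mul_add, Finset.sum_add_distrib]

lemma integ_const_mul (c : ℝ) (f : V → ℝ) : integ μ (fun x => c * f x) = c * integ μ f := by
  simp only [integ, Finset.mul_sum, mul_left_comm]

lemma integ_const (c : ℝ) : integ μ (fun _ => c) = c * vol μ := by
  rw [integ, vol, Finset.mul_sum]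
  simp only [mul_comm]

lemma integ_mono (hmu : ∀ x, 0 ≤ μ x) {f g : V → ℝ} (h : f ≤ g) : integ μ f ≤ integ μ g :=
  Finset.sum_le_sum fun x _ => mul_le_mul_of_nonneg_left (h x) (hmu x)

lemma integ_sum {ι : Type*} (s : Finset ι) (f : ι → V → ℝ) :
    integ μ (fun x => ∑ i ∈ s, f i x) = ∑ i ∈ s, integ μ (f i) := by
  simp only [integ, Finset.mul_sum]
  exact Finset.sum_comm

lemma integ_dirac [DecidableEq V] (hmu : ∀ x, μ x ≠ 0) (q : V) : integ μ (dirac μ q) = 1 := by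
  simp [integ, dirac, hmu q]

lemma integ_lapl {w : V → V → ℝ} (hsymm : ∀ x y, w x y = w y x) (hmu : ∀ x, μ x ≠ 0)
    (u : V → ℝ) : integ μ (lapl μ w u) = 0 := by
  have h : ∀ x, μ x * lapl μ w u x = ∑ y, w x y * u y - ∑ y, w x y * u x := fun x => by
    rw [lapl, ← mul_assoc, mul_one_div_cancel (hmu x), one_mul, ← Finset.sum_sub_distrib]
    simp only [mul_sub]
  simp only [integ, h, Finset.sum_sub_distrib]
  rw [Finset.sum_comm]
  simp only [hsymm, sub_self]

lemma vol_pos [Nonempty V] (hmu : ∀ x, 0 < μ x) : 0 < vol μ :=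
  Finset.sum_pos (fun x _ => hmu x) Finset.univ_nonempty

end Integral

section LowerBound

variable {V : Type*} [Fintype V] {μ : V → ℝ} {w : V → V → ℝ}

lemma lowerBound_along_edge (hnn : ∀ x y, 0 ≤ w x y) (hmu : ∀ x, 0 < μ x) {B : ℝ} {u : V → ℝ}
    (hu : u ≤ 0) (hΔ : ∀ x, -B ≤ lapl μ w u x) {x y : V} (hxy : 0 < w x y) :
    ((∑ z, w x z) * u x - μ x * B) / w x y ≤ u y := by
  have hx : -(μ x * B) ≤ ∑ z, w x z * u z - (∑ z, w x z) * u x := by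
    have := mul_le_mul_of_nonneg_left (hΔ x) (hmu x).le
    rw [lapl, ← mul_assoc, mul_one_div_cancel (hmu x).ne', one_mul, mul_neg] at this
    simpa only [mul_sub, Finset.sum_sub_distrib, Finset.sum_mul] using this
  have hy : ∑ z, w x z * u z ≤ w x y * u y := by
    classical
    rw [← Finset.add_sum_erase _ _ (Finset.mem_univ y)]
    exact add_le_of_nonpos_right <| Finset.sum_nonpos fun z _ =>
      mul_nonpos_of_nonneg_of_nonpos (hnn x z) (hu z)
  rw [div_le_iff₀' hxy]
  linarith

lemma exists_lowerBound_along_path (hnn : ∀ x y, 0 ≤ w x y) (hmu : ∀ x, 0 < μ x) (B : ℝ)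
    {x₀ y : V} (h : Relation.ReflTransGen (fun a b => 0 < w a b) x₀ y) :
    ∃ g : ℝ → ℝ, Monotone g ∧
      ∀ u : V → ℝ, u ≤ 0 → (∀ x, -B ≤ lapl μ w u x) → g (u x₀) ≤ u y := by
  induction h with
  | refl => exact ⟨id, monotone_id, fun _ _ _ => le_rfl⟩
  | @tail y z _ hyz ih =>
    obtain ⟨g, hg, hgu⟩ := ih
    have hdeg : 0 ≤ ∑ v, w y v := Finset.sum_nonneg fun v _ => hnn y v
    refine ⟨fun c => ((∑ v, w y v) * g c - μ y * B) / w y z, fun c d hcd => ?_,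
      fun u hu hΔ => ?_⟩
    · have := hg hcd
      dsimp only
      gcongr
    · calc ((∑ v, w y v) * g (u x₀) - μ y * B) / w y z
          ≤ ((∑ v, w y v) * u y - μ y * B) / w y z := by
            have := hgu u hu hΔ
            gcongr
        _ ≤ u z := lowerBound_along_edge hnn hmu hu hΔ hyz

theorem exists_uniform_lowerBound (hnn : ∀ x y, 0 ≤ w x y) (hmu : ∀ x, 0 < μ x)
    (hconn : ∀ x y : V, Relation.ReflTransGen (fun a b => 0 < w a b) x y) (B c : ℝ) :
    ∃ m : ℝ, ∀ u : V → ℝ, u ≤ 0 → (∀ x, -B ≤ lapl μ w u x) →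
      ∀ x₀, c ≤ u x₀ → ∀ y, m ≤ u y := by
  choose g hg hgu using fun x₀ y => exists_lowerBound_along_path hnn hmu B (hconn x₀ y)
  obtain ⟨m, hm⟩ := (Set.finite_range fun q : V × V => g q.1 q.2 c).bddBelow
  exact ⟨m, fun u hu hΔ x₀ hx₀ y =>
    (hm ⟨(x₀, y), rfl⟩).trans ((hg x₀ y hx₀).trans (hgu x₀ y u hu hΔ))⟩

end LowerBound

section ChernSimons

variable {V : Type*} [DecidableEq V] {μ : V → ℝ} {N : ℕ} {p : Fin N → V}

variable (μ p) in
noncomputable def vortexSource (x : V) : ℝ := 4 * π * ∑ s, dirac μ (p s) x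

lemma vortexSource_nonneg (hmu : ∀ x, 0 < μ x) (x : V) : 0 ≤ vortexSource μ p x := by
  have : 0 ≤ ∑ s, dirac μ (p s) x := Finset.sum_nonneg fun s _ => by
    unfold dirac
    split_ifs
    exacts [one_div_nonneg.mpr (hmu _).le, le_rfl]
  unfold vortexSource
  positivity

lemma vortexSource_le (hmu : ∀ x, 0 < μ x) (x : V) :
    vortexSource μ p x ≤ 4 * π * ∑ s, 1 / μ (p s) := by
  have : ∑ s, dirac μ (p s) x ≤ ∑ s, 1 / μ (p s) := Finset.sum_le_sum fun s _ => by
    unfold dirac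
    split_ifs
    exacts [le_rfl, one_div_nonneg.mpr (hmu _).le]
  unfold vortexSource
  gcongr

variable [Fintype V] {w : V → V → ℝ} {lam : ℝ} {u : V → ℝ}

lemma isSol_iff :
    isSol μ w p lam u ↔ ∀ x, lapl μ w u x = lam * csNonlin (u x) + vortexSource μ p x := by
  simp only [isSol, csNonlin, vortexSource, mul_assoc]

lemma integ_vortexSource (hmu : ∀ x, 0 < μ x) : integ μ (vortexSource μ p) = 4 * π * N := by
  rw [show vortexSource μ p = fun x => 4 * π * ∑ s, dirac μ (p s) x from rfl, integ_const_mul,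
    integ_sum]
  simp [integ_dirac fun x => (hmu x).ne']

lemma isSol.nonpos (hnn : ∀ x y, 0 ≤ w x y) (hmu : ∀ x, 0 < μ x) (hlam : 0 < lam)
    (hu : isSol μ w p lam u) : u ≤ 0 := by
  intro x
  obtain ⟨x₀, -, hx₀⟩ := Finset.exists_max_image Finset.univ u ⟨x, Finset.mem_univ x⟩
  have hmax : lapl μ w u x₀ ≤ 0 :=
    lapl_nonpos_of_forall_le hnn hmu fun y => hx₀ y (Finset.mem_univ y)
  have hF : csNonlin (u x₀) ≤ 0 := by
    rw [isSol_iff.mp hu x₀] at hmax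
    have := vortexSource_nonneg (p := p) hmu x₀
    by_contra! hF
    nlinarith
  exact (hx₀ x (Finset.mem_univ x)).trans (csNonlin_nonpos_iff.mp hF)

lemma isSol.integ_csNonlin (hsymm : ∀ x y, w x y = w y x) (hmu : ∀ x, 0 < μ x)
    (hu : isSol μ w p lam u) : lam * integ μ (fun x => csNonlin (u x)) = -(4 * π * N) := by
  have h := integ_lapl hsymm (fun x => (hmu x).ne') u
  rw [show lapl μ w u = _ from funext (isSol_iff.mp hu), integ_add, integ_const_mul,
    integ_vortexSource hmu] at h
  linarith

lemma isSol.le_lam (hsymm : ∀ x y, w x y = w y x) (hmu : ∀ x, 0 < μ x) (hlam : 0 < lam)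
    (hu : isSol μ w p lam u) : 6 ^ 6 / 5 ^ 5 * (4 * π * N / vol μ) ≤ lam := by
  have hF : -(5 ^ 5 / 6 ^ 6) * vol μ ≤ integ μ (fun x => csNonlin (u x)) := by
    rw [← integ_const]
    exact integ_mono (fun x => (hmu x).le) fun x => neg_le_csNonlin (u x)
  have hvol : 0 ≤ vol μ := Finset.sum_nonneg fun x _ => (hmu x).le
  have h := hu.integ_csNonlin hsymm hmu
  rw [← mul_div_assoc]
  refine div_le_of_le_mul₀ hvol hlam.le ?_
  nlinarith

lemma isSol.exists_log_le [Nonempty V] (hsymm : ∀ x y, w x y = w y x) (hnn : ∀ x y, 0 ≤ w x y)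
    (hmu : ∀ x, 0 < μ x) (hN : 1 ≤ N) {lam₁ : ℝ} (hlam : 0 < lam) (hle : lam ≤ lam₁)
    (hu : isSol μ w p lam u) : ∃ x₀, log (4 * π * N / (lam₁ * vol μ)) ≤ u x₀ := by
  obtain ⟨x₀, -, hx₀⟩ := Finset.exists_max_image Finset.univ u Finset.univ_nonempty
  refine ⟨x₀, ?_⟩
  have hF : -exp (u x₀) * vol μ ≤ integ μ (fun x => csNonlin (u x)) := by
    rw [← integ_const]
    refine integ_mono (fun x => (hmu x).le) fun x => ?_
    have := neg_csNonlin_le_exp (hu.nonpos hnn hmu hlam x)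
    have := exp_le_exp.mpr (hx₀ x (Finset.mem_univ x))
    dsimp only
    linarith
  have h := hu.integ_csNonlin hsymm hmu
  have hvol := vol_pos hmu
  have hN' : (1 : ℝ) ≤ N := by exact_mod_cast hN
  have hπN : 0 < 4 * π * N := by positivity
  have hlam₁ : 0 < lam₁ := hlam.trans_le hle
  rw [log_le_iff_le_exp (by positivity), div_le_iff₀ (by positivity)]
  have : 0 ≤ exp (u x₀) * vol μ := by positivity
  nlinarith

theorem exists_lowerBound_of_isSol [Nonempty V] (hsymm : ∀ x y, w x y = w y x)
    (hnn : ∀ x y, 0 ≤ w x y) (hmu : ∀ x, 0 < μ x)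
    (hconn : ∀ x y : V, Relation.ReflTransGen (fun a b => 0 < w a b) x y) (hN : 1 ≤ N)
    (lam₁ : ℝ) :
    ∃ m : ℝ, ∀ lam u, 0 < lam → lam ≤ lam₁ → isSol μ w p lam u → ∀ x, m ≤ u x := by
  obtain ⟨m, hm⟩ := exists_uniform_lowerBound hnn hmu hconn (lam₁ * (5 ^ 5 / 6 ^ 6))
    (log (4 * π * N / (lam₁ * vol μ)))
  refine ⟨m, fun lam u hlam hle hu => ?_⟩
  obtain ⟨x₀, hx₀⟩ := hu.exists_log_le hsymm hnn hmu hN hlam hle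
  refine hm u (hu.nonpos hnn hmu hlam) (fun x => ?_) x₀ hx₀
  rw [isSol_iff.mp hu x]
  have := neg_le_csNonlin (u x)
  have := vortexSource_nonneg (p := p) hmu x
  nlinarith

lemma exists_isSol_of_subsolution (hnn : ∀ x y, 0 ≤ w x y) (hmu : ∀ x, 0 < μ x) (hlam : 0 < lam)
    {a : V → ℝ} (ha : a ≤ 0)
    (hsub : ∀ x, lam * csNonlin (a x) + vortexSource μ p x ≤ lapl μ w a x) :
    ∃ u, isSol μ w p lam u := by
  obtain ⟨u, -, hu⟩ := exists_lapl_eq_of_sub_super hnn hmu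
    (f := fun x t => lam * csNonlin t + vortexSource μ p x) ha hsub
    (fun x => by
      rw [Pi.zero_apply, csNonlin_zero, mul_zero, zero_add]
      exact (congrFun (lapl_const 0) x).trans_le (vortexSource_nonneg hmu x))
    (by positivity : 0 < 5 * lam) fun x s t _ hst ht => by
      have := csNonlin_sub_le hst ht
      nlinarith
  exact ⟨u, isSol_iff.mpr hu⟩

lemma isSol.exists_of_le (hnn : ∀ x y, 0 ≤ w x y) (hmu : ∀ x, 0 < μ x) (hlam : 0 < lam)
    {lam' : ℝ} (hle : lam ≤ lam') (hu : isSol μ w p lam u) : ∃ v, isSol μ w p lam' v := by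
  have hu₀ := hu.nonpos hnn hmu hlam
  refine exists_isSol_of_subsolution hnn hmu (hlam.trans_le hle) hu₀ fun x => ?_
  rw [isSol_iff.mp hu x]
  have := csNonlin_nonpos_iff.mpr (hu₀ x)
  nlinarith

lemma exists_isSol_of_large (hnn : ∀ x y, 0 ≤ w x y) (hmu : ∀ x, 0 < μ x) (hlam : 0 < lam)
    (hle : 6 ^ 6 / 5 ^ 5 * (4 * π * ∑ s, 1 / μ (p s)) ≤ lam) : ∃ u, isSol μ w p lam u := by
  refine exists_isSol_of_subsolution hnn hmu hlam (a := fun _ => -log 6)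
    (fun _ => neg_nonpos.mpr (log_nonneg (by norm_num))) fun x => ?_
  rw [lapl_const, csNonlin_neg_log_six]
  have := vortexSource_le (p := p) hmu x
  dsimp only [Pi.zero_apply]
  nlinarith

lemma isClosed_setOf_isSol : IsClosed {q : ℝ × (V → ℝ) | isSol μ w p q.1 q.2} := by
  simp only [isSol_iff, Set.ofPred_forall]
  refine isClosed_iInter fun x => isClosed_eq
    ((continuous_apply x).comp (continuous_lapl.comp continuous_snd)) ?_
  exact (continuous_fst.mul (continuous_csNonlin.comp ((continuous_apply x).comp
    continuous_snd))).add continuous_const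

/-- By the a priori estimate, solutions for `λ' ∈ (λ, λ + 1]` lie in a compact set, and
solvability is a closed condition. -/
lemma exists_isSol_of_forall_gt [Nonempty V] (hsymm : ∀ x y, w x y = w y x)
    (hnn : ∀ x y, 0 ≤ w x y) (hmu : ∀ x, 0 < μ x)
    (hconn : ∀ x y : V, Relation.ReflTransGen (fun a b => 0 < w a b) x y) (hN : 1 ≤ N)
    (hlam : 0 < lam) (h : ∀ lam', lam < lam' → ∃ u, isSol μ w p lam' u) :
    ∃ u, isSol μ w p lam u := by
  obtain ⟨m, hm⟩ := exists_lowerBound_of_isSol (p := p) hsymm hnn hmu hconn hN (lam + 1)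
  set Z := (Set.Icc lam (lam + 1) ×ˢ Set.Icc (fun _ => m) (0 : V → ℝ)) ∩
    {q : ℝ × (V → ℝ) | isSol μ w p q.1 q.2}
  have hZ : IsClosed (Prod.fst '' Z) :=
    (((isCompact_Icc.prod isCompact_Icc).inter_right isClosed_setOf_isSol).image
      continuous_fst).isClosed
  have hsub : Set.Ioc lam (lam + 1) ⊆ Prod.fst '' Z := by
    rintro lam' ⟨h₁, h₂⟩
    obtain ⟨u, hu⟩ := h lam' h₁
    exact ⟨(lam', u), ⟨⟨⟨h₁.le, h₂⟩, hm lam' u (hlam.trans h₁) h₂ hu,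
      hu.nonpos hnn hmu (hlam.trans h₁)⟩, hu⟩, rfl⟩
  have hmem : lam ∈ Prod.fst '' Z := closure_minimal hsub hZ <| by
    rw [closure_Ioc (by linarith)]
    exact ⟨le_rfl, by linarith⟩
  obtain ⟨⟨_, u⟩, ⟨-, hu⟩, rfl⟩ := hmem
  exact ⟨u, hu⟩

end ChernSimons

theorem critical_value_dichotomy_general {V : Type*} [Fintype V] [DecidableEq V] [Nonempty V]
    (w : V → V → ℝ) (μ : V → ℝ)
    (hsymm : ∀ x y, w x y = w y x) (hnn : ∀ x y, 0 ≤ w x y)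
    (hconn : ∀ x y : V, Relation.ReflTransGen (fun a b => 0 < w a b) x y)
    (hmu : ∀ x, 0 < μ x)
    (N : ℕ) (hN : 1 ≤ N) (p : Fin N → V) :
    ∃ lamhat : ℝ,
      lamhat ≥ (6 ^ 6 / 5 ^ 5) * (4 * π * N / vol μ) ∧
      (∀ lam : ℝ, lamhat ≤ lam → ∃ u : V → ℝ, isSol μ w p lam u) ∧
      (∀ lam : ℝ, 0 < lam → lam < lamhat → ¬ ∃ u : V → ℝ, isSol μ w p lam u) := by
  set S := {lam : ℝ | 0 < lam ∧ ∃ u, isSol μ w p lam u}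
  set lam₀ := max (6 ^ 6 / 5 ^ 5 * (4 * π * ∑ s, 1 / μ (p s))) 1
  have hS : S.Nonempty := ⟨lam₀, by positivity,
    exists_isSol_of_large hnn hmu (by positivity) (le_max_left _ _)⟩
  have hS_ge : ∀ lam ∈ S, 6 ^ 6 / 5 ^ 5 * (4 * π * N / vol μ) ≤ lam :=
    fun lam ⟨hlam, _, hu⟩ => hu.le_lam hsymm hmu hlam
  have hpos : 0 < sInf S := by
    have := vol_pos hmu
    have : (1 : ℝ) ≤ N := by exact_mod_cast hN
    exact lt_of_lt_of_le (by positivity) (le_csInf hS hS_ge)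
  have hgt : ∀ lam, sInf S < lam → ∃ u, isSol μ w p lam u := fun lam hlam => by
    obtain ⟨lam', ⟨hlam', u, hu⟩, hlt⟩ := exists_lt_of_csInf_lt hS hlam
    exact hu.exists_of_le hnn hmu hlam' hlt.le
  refine ⟨sInf S, le_csInf hS hS_ge, fun lam hle => ?_, fun lam hlam hlt hsol => ?_⟩
  · rcases hle.eq_or_lt with rfl | hlt
    · exact exists_isSol_of_forall_gt hsymm hnn hmu hconn hN hpos hgt
    · exact hgt lam hlt
  · exact hlt.not_ge (csInf_le ⟨_, hS_ge⟩ ⟨hlam, hsol⟩)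

/-- there exists `λ̂ ≥ (6^6/5^5)·(4πN/Vol(V))` such that the generalized
Chern–Simons equation has a solution for every `λ ≥ λ̂` and no solution for `0 < λ < λ̂`. -/
theorem critical_value_dichotomy {V : Type*} [Fintype V] [DecidableEq V] [Nonempty V]
    (w : V → V → ℝ) (μ : V → ℝ)
    (hsymm : ∀ x y, w x y = w y x) (hnn : ∀ x y, 0 ≤ w x y)
    (hconn : ∀ x y : V, Relation.ReflTransGen (fun a b => 0 < w a b) x y)
    (hmu : ∀ x, 0 < μ x)
    (N : ℕ) (hN : 1 ≤ N) (p : Fin N → V) (hp : Function.Injective p) :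
    ∃ lamhat : ℝ,
      lamhat ≥ (6 ^ 6 / 5 ^ 5) * (4 * π * N / vol μ) ∧
      (∀ lam : ℝ, lamhat ≤ lam → ∃ u : V → ℝ, isSol μ w p lam u) ∧
      (∀ lam : ℝ, 0 < lam → lam < lamhat → ¬ ∃ u : V → ℝ, isSol μ w p lam u) :=
  critical_value_dichotomy_general w μ hsymm hnn hconn hmu N hN p
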